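/- Let τ be the graded flip τ(a ⊗ b) = (−1)^{ab} b ⊗ a and P_Λ^{op} := τ ∘ P_Λ ∘ τ. Then {v, w} := μ ∘ (P_Λ − P_Λ^{op})(v ⊗ w) defines a ℤ₂-graded Poisson bracket on Sym(V): it is graded antisymmetric, satisfies the graded Leibniz rule in each argument and the graded Jacobi identity. Moreover {v, w} = 2 μ ∘ P_{Λ₋}(v ⊗ w), so the bracket depends only on the antisymmetric part Λ₋ = ½(Λ − Λ∘τ) of Λ. -/

import Mathlib

open scoped TensorProduct

section AlgCore

variable (𝕜 : Type) [Field 𝕜] [CharZero 𝕜]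
variable (A : Type) [Ring A] [Algebra 𝕜 A]

/-- The Koszul sign `(−1)^{ij}` of two parities. -/
def ksign (i j : ZMod 2) : 𝕜 := (-1 : 𝕜) ^ (i.val * j.val)

/-- The multiplication map `μ : A ⊗ A → A`. -/
noncomputable def mu : A ⊗[𝕜] A →ₗ[𝕜] A := LinearMap.mul' 𝕜 A

/-- `P ⊗ id` acting on the first two factors of `A ⊗ (A ⊗ A)`. -/
noncomputable def P12 (P : A ⊗[𝕜] A →ₗ[𝕜] A ⊗[𝕜] A) :
    A ⊗[𝕜] (A ⊗[𝕜] A) →ₗ[𝕜] A ⊗[𝕜] (A ⊗[𝕜] A) :=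
  (TensorProduct.assoc 𝕜 A A A).toLinearMap ∘ₗ
    (LinearMap.rTensor A P) ∘ₗ (TensorProduct.assoc 𝕜 A A A).symm.toLinearMap

/-- `id ⊗ P` acting on the last two factors of `A ⊗ (A ⊗ A)`. -/
noncomputable def P23 (P : A ⊗[𝕜] A →ₗ[𝕜] A ⊗[𝕜] A) :
    A ⊗[𝕜] (A ⊗[𝕜] A) →ₗ[𝕜] A ⊗[𝕜] (A ⊗[𝕜] A) :=
  LinearMap.lTensor A P

/-- `P^{13} = (id ⊗ τ) ∘ (P ⊗ id) ∘ (id ⊗ τ)`. -/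
noncomputable def P13 (P τ : A ⊗[𝕜] A →ₗ[𝕜] A ⊗[𝕜] A) :
    A ⊗[𝕜] (A ⊗[𝕜] A) →ₗ[𝕜] A ⊗[𝕜] (A ⊗[𝕜] A) :=
  (LinearMap.lTensor A τ) ∘ₗ P12 𝕜 A P ∘ₗ (LinearMap.lTensor A τ)

/-- `μ ⊗ id : A ⊗ (A ⊗ A) → A ⊗ A`. -/
noncomputable def mu12 : A ⊗[𝕜] (A ⊗[𝕜] A) →ₗ[𝕜] A ⊗[𝕜] A :=
  (LinearMap.rTensor A (mu 𝕜 A)) ∘ₗ (TensorProduct.assoc 𝕜 A A A).symm.toLinearMap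

/-- `id ⊗ μ : A ⊗ (A ⊗ A) → A ⊗ A`. -/
noncomputable def mu23 : A ⊗[𝕜] (A ⊗[𝕜] A) →ₗ[𝕜] A ⊗[𝕜] A :=
  LinearMap.lTensor A (mu 𝕜 A)

/-- The operator Leibniz rules `P ∘ (μ ⊗ id) = (μ ⊗ id) ∘ (P^{13} + P^{23})` and
`P ∘ (id ⊗ μ) = (id ⊗ μ) ∘ (P^{12} + P^{13})` characterizing biderivation-type
operators. -/
def LeibnizRules (P τ : A ⊗[𝕜] A →ₗ[𝕜] A ⊗[𝕜] A) : Prop :=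
  P ∘ₗ mu12 𝕜 A = mu12 𝕜 A ∘ₗ (P13 𝕜 A P τ + P23 𝕜 A P) ∧
    P ∘ₗ mu23 𝕜 A = mu23 𝕜 A ∘ₗ (P12 𝕜 A P + P13 𝕜 A P τ)

/-- `τ` is the Koszul-graded flip of `A ⊗ A`. -/
def IsKoszulFlip (gr : ZMod 2 → Submodule 𝕜 A) (τ : A ⊗[𝕜] A →ₗ[𝕜] A ⊗[𝕜] A) : Prop :=
  ∀ (i j : ZMod 2), ∀ a ∈ gr i, ∀ b ∈ gr j,
    τ (a ⊗ₜ[𝕜] b) = ksign 𝕜 i j • (b ⊗ₜ[𝕜] a)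

/-- The `k`-th star product coefficient `C_k(a,b) = (1/k!) μ(P^k(a ⊗ b))`. -/
noncomputable def Ck (P : A ⊗[𝕜] A →ₗ[𝕜] A ⊗[𝕜] A) (k : ℕ) (a b : A) : A :=
  (k.factorial : 𝕜)⁻¹ • mu 𝕜 A ((P ^ k) (a ⊗ₜ[𝕜] b))

/-- The star product `⋆ = μ ∘ e^{νP}` on `A⟦ν⟧`, extended `𝕜⟦ν⟧`-bilinearly. -/
noncomputable def starPS (P : A ⊗[𝕜] A →ₗ[𝕜] A ⊗[𝕜] A) (f g : PowerSeries A) :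
    PowerSeries A :=
  PowerSeries.mk fun n =>
    ∑ km ∈ Finset.HasAntidiagonal.antidiagonal n, ∑ ij ∈ Finset.HasAntidiagonal.antidiagonal km.2,
      Ck 𝕜 A P km.1 (PowerSeries.coeff (R := A) ij.1 f) (PowerSeries.coeff (R := A) ij.2 g)

/-- The submodule `p ⊗ q ⊆ A ⊗ A` generated by two submodules. -/
noncomputable def tsub (p q : Submodule 𝕜 A) : Submodule 𝕜 (A ⊗[𝕜] A) :=
  LinearMap.range (TensorProduct.map p.subtype q.subtype)

end AlgCore

/-- The Poisson bracket `{a, b} = μ ∘ (P − τ∘P∘τ)(a ⊗ b)`. -/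
noncomputable def brA (𝕜 : Type) [Field 𝕜] [CharZero 𝕜] (A : Type) [Ring A] [Algebra 𝕜 A]
    (P τ : A ⊗[𝕜] A →ₗ[𝕜] A ⊗[𝕜] A) (a b : A) : A :=
  mu 𝕜 A ((P - τ ∘ₗ P ∘ₗ τ) (a ⊗ₜ[𝕜] b))

/-!
`μ ∘ P` is a biderivation for the Koszul signs which on generators `v, w ∈ V` takes the scalar
value `Λ(v, w)`; since `Λ` is even it preserves parity. Hence `{a, b} = μ P(a ⊗ b) ∓ μ P(b ⊗ a)`
is a parity-preserving, graded antisymmetric biderivation whose values on `V × V` are scalars.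
For such a bracket the Jacobiator `J(a, b, ·)` is a graded derivation, so it vanishes as soon as
it vanishes on generators, and its cyclic symmetry moves a generator into the last slot; on
triples of generators it vanishes because brackets of generators are scalars. Finally, two
biderivations that agree on `V × V` agree everywhere, and on generators
`{v, w} = Λ(v, w) - (-1)^{|v||w|} Λ(w, v) = 2 Λ₋(v, w)`.
-/
section Sign

variable {𝕜 : Type} [Field 𝕜]

theorem ZMod.two_eq_zero_or_one (i : ZMod 2) : i = 0 ∨ i = 1 := by
  revert i; decide

theorem ksign_comm (i j : ZMod 2) : ksign 𝕜 i j = ksign 𝕜 j i := by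
  rw [ksign, ksign, Nat.mul_comm]

@[simp] theorem ksign_zero_left (j : ZMod 2) : ksign 𝕜 0 j = 1 := by simp [ksign]

@[simp] theorem ksign_zero_right (i : ZMod 2) : ksign 𝕜 i 0 = 1 := by simp [ksign]

@[simp] theorem ksign_one_one : ksign 𝕜 1 1 = -1 := by simp [ksign, ZMod.val_one]

theorem ksign_add_left (i j k : ZMod 2) : ksign 𝕜 (i + j) k = ksign 𝕜 i k * ksign 𝕜 j k := by
  rcases i.two_eq_zero_or_one with rfl | rfl <;> rcases j.two_eq_zero_or_one with rfl | rfl <;>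
    rcases k.two_eq_zero_or_one with rfl | rfl <;> simp [show (1 + 1 : ZMod 2) = 0 from rfl]

theorem ksign_add_right (i j k : ZMod 2) : ksign 𝕜 i (j + k) = ksign 𝕜 i j * ksign 𝕜 i k := by
  rw [ksign_comm, ksign_add_left, ksign_comm j, ksign_comm k]

theorem ksign_mul_self (i j : ZMod 2) : ksign 𝕜 i j * ksign 𝕜 i j = 1 := by
  rw [ksign, ← pow_add, ← two_mul, pow_mul, neg_one_sq, one_pow]

end Sign

section Homogeneous

variable {𝕜 : Type} [Field 𝕜] {A : Type} [Ring A] [Algebra 𝕜 A]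
variable (gr : ZMod 2 → Submodule 𝕜 A) [GradedAlgebra gr]

theorem homogeneous_induction {G : Set A} (hG : ∀ v ∈ G, ∃ i, v ∈ gr i)
    (hgen : Algebra.adjoin 𝕜 G = ⊤) {p : ZMod 2 → A → Prop} (zero : ∀ i, p i 0)
    (add : ∀ i x y, p i x → p i y → p i (x + y)) (smul : ∀ i (c : 𝕜) x, p i x → p i (c • x))
    (one : p 0 1) (mem : ∀ i, ∀ v ∈ G, v ∈ gr i → p i v)
    (mul : ∀ i j x y, x ∈ gr i → y ∈ gr j → p i x → p j y → p (i + j) (x * y)) :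
    ∀ i, ∀ a ∈ gr i, p i a := by
  have monomial : ∀ m ∈ Submonoid.closure G, ∃ k, m ∈ gr k ∧ p k m := by
    intro m hm
    induction hm using Submonoid.closure_induction with
    | mem v hv =>
      obtain ⟨k, hk⟩ := hG v hv
      exact ⟨k, hk, mem k v hv hk⟩
    | one => exact ⟨0, SetLike.one_mem_graded gr, one⟩
    | mul x y _ _ hx hy =>
      obtain ⟨i, hxi, hx⟩ := hx
      obtain ⟨j, hyj, hy⟩ := hy
      exact ⟨i + j, SetLike.mul_mem_graded hxi hyj, mul i j x y hxi hyj hx hy⟩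
  have component : ∀ a i, p i (DirectSum.decompose gr a i) := by
    intro a i
    have ha : a ∈ Submodule.span 𝕜 (Submonoid.closure G : Set A) := by
      rw [← Algebra.adjoin_eq_span, hgen]
      trivial
    induction ha using Submodule.span_induction with
    | mem m hm =>
      obtain ⟨k, hk, hpk⟩ := monomial m hm
      by_cases hki : k = i
      · subst hki
        rwa [DirectSum.decompose_of_mem_same gr hk]
      · rw [DirectSum.decompose_of_mem_ne gr hk hki]
        exact zero i
    | zero => simpa using zero i
    | add x y _ _ hx hy => simpa using add i _ _ hx hy
    | smul c x _ hx => simpa [DirectSum.smul_apply] using smul i c _ hx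
  intro i a ha
  simpa [DirectSum.decompose_of_mem_same gr ha] using component a i

theorem eq_zero_of_gradedDerivation {G : Set A} (hG : ∀ v ∈ G, ∃ i, v ∈ gr i)
    (hgen : Algebra.adjoin 𝕜 G = ⊤) {D : A →ₗ[𝕜] A} (p : ZMod 2)
    (hD : ∀ j k, ∀ b ∈ gr j, ∀ c ∈ gr k, D (b * c) = D b * c + ksign 𝕜 p j • (b * D c))
    (hDG : ∀ v ∈ G, D v = 0) : D = 0 := by
  have h1 := SetLike.one_mem_graded gr
  have homogeneous : ∀ i, ∀ a ∈ gr i, D a = 0 :=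
    homogeneous_induction gr hG hgen (p := fun _ a => D a = 0) (fun _ => map_zero D)
      (fun _ x y hx hy => by rw [map_add, hx, hy, add_zero])
      (fun _ c x hx => by rw [map_smul, hx, smul_zero]) (by simpa using hD 0 0 1 h1 1 h1)
      (fun _ v hv _ => hDG v hv) (fun i j x y hx hy hDx hDy => by simp [hD i j x hx y hy, hDx, hDy])
  exact DirectSum.decompose_lhom_ext gr fun i => LinearMap.ext fun ⟨a, ha⟩ => homogeneous i a ha

theorem ext_of_homogeneous₂ {M : Type} [AddCommGroup M] [Module 𝕜 M] {f g : A →ₗ[𝕜] A →ₗ[𝕜] M}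
    (h : ∀ i j, ∀ a ∈ gr i, ∀ b ∈ gr j, f a b = g a b) : f = g :=
  DirectSum.decompose_lhom_ext gr fun i => LinearMap.ext fun ⟨a, ha⟩ =>
    DirectSum.decompose_lhom_ext gr fun j => LinearMap.ext fun ⟨b, hb⟩ => h i j a ha b hb

end Homogeneous

section Biderivation

variable {𝕜 : Type} [Field 𝕜] {A : Type} [Ring A] [Algebra 𝕜 A]
variable (gr : ZMod 2 → Submodule 𝕜 A)

/-- The Leibniz rules in the form obeyed by `μ ∘ P` for every `P` satisfying `LeibnizRules`:
the parity of the values of `B` never enters. -/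
structure IsBiderivation (B : A →ₗ[𝕜] A →ₗ[𝕜] A) : Prop where
  mul_left : ∀ i j k, ∀ a ∈ gr i, ∀ b ∈ gr j, ∀ c ∈ gr k,
    B (a * b) c = a * B b c + ksign 𝕜 j k • (B a c * b)
  mul_right : ∀ i j k, ∀ a ∈ gr i, ∀ b ∈ gr j, ∀ c ∈ gr k,
    B a (b * c) = B a b * c + ksign 𝕜 j k • (B a c * b)

variable {gr}

theorem IsBiderivation.sub {B B' : A →ₗ[𝕜] A →ₗ[𝕜] A} (hB : IsBiderivation gr B)
    (hB' : IsBiderivation gr B') : IsBiderivation gr (B - B') where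
  mul_left i j k a ha b hb c hc := by
    simp only [LinearMap.sub_apply, hB.mul_left i j k a ha b hb c hc,
      hB'.mul_left i j k a ha b hb c hc, mul_sub, sub_mul, smul_sub]
    abel
  mul_right i j k a ha b hb c hc := by
    simp only [LinearMap.sub_apply, hB.mul_right i j k a ha b hb c hc,
      hB'.mul_right i j k a ha b hb c hc, sub_mul, smul_sub]
    abel

theorem IsBiderivation.smul {B : A →ₗ[𝕜] A →ₗ[𝕜] A} (hB : IsBiderivation gr B) (e : 𝕜) :
    IsBiderivation gr (e • B) where
  mul_left i j k a ha b hb c hc := by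
    simp only [LinearMap.smul_apply, hB.mul_left i j k a ha b hb c hc, mul_smul_comm,
      smul_mul_assoc]
    module
  mul_right i j k a ha b hb c hc := by
    simp only [LinearMap.smul_apply, hB.mul_right i j k a ha b hb c hc, smul_mul_assoc]
    module

variable [GradedAlgebra gr] {G : Set A} {B : A →ₗ[𝕜] A →ₗ[𝕜] A}

theorem IsBiderivation.one_left (hB : IsBiderivation gr B) {k : ZMod 2} {c : A} (hc : c ∈ gr k) :
    B 1 c = 0 := by
  have h1 := SetLike.one_mem_graded gr
  simpa using hB.mul_left 0 0 k 1 h1 1 h1 c hc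

theorem IsBiderivation.one_right (hB : IsBiderivation gr B) {i : ZMod 2} {a : A} (ha : a ∈ gr i) :
    B a 1 = 0 := by
  have h1 := SetLike.one_mem_graded gr
  simpa using hB.mul_right i 0 0 a ha 1 h1 1 h1

theorem IsBiderivation.apply_mem (hB : IsBiderivation gr B) (hG : ∀ v ∈ G, ∃ i, v ∈ gr i)
    (hgen : Algebra.adjoin 𝕜 G = ⊤) (S : ZMod 2 → Submodule 𝕜 A)
    (hS : ∀ i j, ∀ x ∈ gr i, ∀ s ∈ S j, x * s ∈ S (i + j) ∧ s * x ∈ S (i + j))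
    (hbase : ∀ i j, ∀ v ∈ G, ∀ w ∈ G, v ∈ gr i → w ∈ gr j → B v w ∈ S (i + j)) :
    ∀ i j, ∀ a ∈ gr i, ∀ b ∈ gr j, B a b ∈ S (i + j) := by
  have generator_left : ∀ i, ∀ v ∈ G, v ∈ gr i → ∀ j, ∀ b ∈ gr j, B v b ∈ S (i + j) := by
    intro i v hv hvi
    refine homogeneous_induction gr hG hgen (p := fun j b => B v b ∈ S (i + j))
      (by simp) (fun j x y hx hy => by simpa using add_mem hx hy)
      (fun j c x hx => by simpa using Submodule.smul_mem _ c hx) (by simp [hB.one_right hvi])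
      (fun j w hw hwj => hbase i j v hv w hw hvi hwj) ?_
    intro j k x y hx hy hvx hvy
    rw [hB.mul_right i j k v hvi x hx y hy]
    refine add_mem ?_ (Submodule.smul_mem _ _ ?_)
    · convert (hS k _ y hy _ hvx).2 using 2; abel
    · convert (hS j _ x hx _ hvy).2 using 2; abel
  intro i j a ha
  refine homogeneous_induction gr hG hgen (p := fun i a => ∀ j, ∀ b ∈ gr j, B a b ∈ S (i + j))
    (by simp) (fun i x y hx hy j b hb => by simpa using add_mem (hx j b hb) (hy j b hb))
    (fun i c x hx j b hb => by simpa using Submodule.smul_mem _ c (hx j b hb))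
    (fun j b hb => by simp [hB.one_left hb]) generator_left ?_ i a ha j
  intro i k x y hx hy hxb hyb j b hb
  rw [hB.mul_left i k j x hx y hy b hb]
  refine add_mem ?_ (Submodule.smul_mem _ _ ?_)
  · convert (hS i _ x hx _ (hyb j b hb)).1 using 2; abel
  · convert (hS k _ y hy _ (hxb j b hb)).2 using 2; abel

theorem IsBiderivation.mem_gr (hB : IsBiderivation gr B) (hG : ∀ v ∈ G, ∃ i, v ∈ gr i)
    (hgen : Algebra.adjoin 𝕜 G = ⊤)
    (hbase : ∀ i j, ∀ v ∈ G, ∀ w ∈ G, v ∈ gr i → w ∈ gr j → B v w ∈ gr (i + j)) :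
    ∀ i j, ∀ a ∈ gr i, ∀ b ∈ gr j, B a b ∈ gr (i + j) :=
  hB.apply_mem hG hgen gr (fun i j _ hx _ hs =>
    ⟨SetLike.mul_mem_graded hx hs, add_comm i j ▸ SetLike.mul_mem_graded hs hx⟩) hbase

theorem IsBiderivation.ext {B' : A →ₗ[𝕜] A →ₗ[𝕜] A} (hB : IsBiderivation gr B)
    (hB' : IsBiderivation gr B') (hG : ∀ v ∈ G, ∃ i, v ∈ gr i) (hgen : Algebra.adjoin 𝕜 G = ⊤)
    (h : ∀ v ∈ G, ∀ w ∈ G, B v w = B' v w) : B = B' := by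
  have hsub := (hB.sub hB').apply_mem hG hgen (fun _ => ⊥) (by simp)
    (fun _ _ v hv w hw _ _ => by simp [h v hv w hw])
  exact ext_of_homogeneous₂ gr fun i j a ha b hb => by simpa [sub_eq_zero] using hsub i j a ha b hb

end Biderivation

section Jacobi

variable {𝕜 : Type} [Field 𝕜] {A : Type} [Ring A] [Algebra 𝕜 A]
variable (gr : ZMod 2 → Submodule 𝕜 A)

structure IsAntisymmBiderivation (B : A →ₗ[𝕜] A →ₗ[𝕜] A) : Prop where
  mem_gr : ∀ i j, ∀ a ∈ gr i, ∀ b ∈ gr j, B a b ∈ gr (i + j)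
  antisymm : ∀ i j, ∀ a ∈ gr i, ∀ b ∈ gr j, B a b = -(ksign 𝕜 i j • B b a)
  mul_right : ∀ i j, ∀ a ∈ gr i, ∀ b ∈ gr j, ∀ c,
    B a (b * c) = B a b * c + ksign 𝕜 i j • (b * B a c)

variable {gr} {B : A →ₗ[𝕜] A →ₗ[𝕜] A}

variable (B) in
def jacobiator (i j : ZMod 2) (a b : A) : A →ₗ[𝕜] A :=
  B a ∘ₗ B b - B (B a b) - ksign 𝕜 i j • (B b ∘ₗ B a)

@[simp] theorem jacobiator_apply (i j : ZMod 2) (a b c : A) :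
    jacobiator B i j a b c = B a (B b c) - B (B a b) c - ksign 𝕜 i j • B b (B a c) := rfl

theorem IsAntisymmBiderivation.jacobiator_mul (hB : IsAntisymmBiderivation gr B)
    {i j k : ZMod 2} {a b c : A} (ha : a ∈ gr i) (hb : b ∈ gr j) (hc : c ∈ gr k) (d : A) :
    jacobiator B i j a b (c * d) =
      jacobiator B i j a b c * d + ksign 𝕜 (i + j) k • (c * jacobiator B i j a b d) := by
  have hab := hB.mem_gr i j a ha b hb
  have hac := hB.mem_gr i k a ha c hc
  have hbc := hB.mem_gr j k b hb c hc
  simp only [jacobiator_apply, map_add, map_smul, hB.mul_right i k a ha c hc,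
    hB.mul_right j k b hb c hc, hB.mul_right (i + j) k _ hab c hc,
    hB.mul_right i (j + k) a ha _ hbc, hB.mul_right j (i + k) b hb _ hac]
  simp only [ksign_add_left, ksign_add_right, smul_add, smul_sub, mul_sub, sub_mul, smul_smul,
    smul_mul_assoc, mul_smul_comm]
  rcases i.two_eq_zero_or_one with rfl | rfl <;> rcases j.two_eq_zero_or_one with rfl | rfl <;>
    rcases k.two_eq_zero_or_one with rfl | rfl <;>
    simp only [ksign_zero_left, ksign_zero_right, ksign_one_one] <;> module

theorem IsAntisymmBiderivation.jacobiator_rotate (hB : IsAntisymmBiderivation gr B)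
    {i j k : ZMod 2} {a b c : A} (ha : a ∈ gr i) (hb : b ∈ gr j) (hc : c ∈ gr k) :
    jacobiator B i j a b c = (ksign 𝕜 k i * ksign 𝕜 i j) • jacobiator B j k b c a := by
  simp only [jacobiator_apply]
  rw [hB.antisymm (i + j) k _ (hB.mem_gr i j a ha b hb) c hc, hB.antisymm i k a ha c hc,
    hB.antisymm (j + k) i _ (hB.mem_gr j k b hb c hc) a ha, hB.antisymm j i b hb a ha]
  simp only [map_neg, map_smul, ksign_add_left, smul_sub, smul_neg, smul_smul]
  rcases i.two_eq_zero_or_one with rfl | rfl <;> rcases j.two_eq_zero_or_one with rfl | rfl <;>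
    rcases k.two_eq_zero_or_one with rfl | rfl <;>
    simp only [ksign_zero_left, ksign_zero_right, ksign_one_one] <;> module

variable [GradedAlgebra gr]

theorem IsAntisymmBiderivation.mul_left (hB : IsAntisymmBiderivation gr B) {i j k : ZMod 2}
    {a b c : A} (ha : a ∈ gr i) (hb : b ∈ gr j) (hc : c ∈ gr k) :
    B (a * b) c = a * B b c + ksign 𝕜 j k • (B a c * b) := by
  rw [hB.antisymm (i + j) k _ (SetLike.mul_mem_graded ha hb) c hc, hB.mul_right k i c hc a ha b,
    hB.antisymm k i c hc a ha, hB.antisymm k j c hc b hb]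
  simp only [ksign_add_left, smul_add, neg_mul, mul_neg, smul_neg, neg_add, neg_neg,
    smul_mul_assoc, mul_smul_comm, smul_smul]
  rcases i.two_eq_zero_or_one with rfl | rfl <;> rcases j.two_eq_zero_or_one with rfl | rfl <;>
    rcases k.two_eq_zero_or_one with rfl | rfl <;>
    simp only [ksign_zero_left, ksign_zero_right, ksign_one_one] <;> module

theorem IsAntisymmBiderivation.isBiderivation (hB : IsAntisymmBiderivation gr B)
    (hcomm : ∀ i j, ∀ a ∈ gr i, ∀ b ∈ gr j, a * b = ksign 𝕜 i j • (b * a)) :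
    IsBiderivation gr B where
  mul_left _ _ _ _ ha _ hb _ hc := hB.mul_left ha hb hc
  mul_right i j k a ha b hb c hc := by
    rw [hB.mul_right i j a ha b hb c, hcomm j (i + k) b hb _ (hB.mem_gr i k a ha c hc), smul_smul,
      ksign_add_right, ksign_comm j i, ← mul_assoc, ksign_mul_self, one_mul]

theorem IsAntisymmBiderivation.apply_one (hB : IsAntisymmBiderivation gr B) {i : ZMod 2} {a : A}
    (ha : a ∈ gr i) : B a 1 = 0 := by
  have h1 := SetLike.one_mem_graded gr
  simpa using hB.mul_right i 0 a ha 1 h1 1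

theorem IsAntisymmBiderivation.one_apply (hB : IsAntisymmBiderivation gr B) {i : ZMod 2} {a : A}
    (ha : a ∈ gr i) : B 1 a = 0 := by
  rw [hB.antisymm 0 i 1 (SetLike.one_mem_graded gr) a ha, hB.apply_one ha, smul_zero, neg_zero]

theorem IsAntisymmBiderivation.jacobiator_eq_zero (hB : IsAntisymmBiderivation gr B) {G : Set A}
    (hG : ∀ v ∈ G, ∃ i, v ∈ gr i) (hgen : Algebra.adjoin 𝕜 G = ⊤)
    (hscalar : ∀ v ∈ G, ∀ w ∈ G, ∃ e : 𝕜, B v w = e • 1) :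
    ∀ i j, ∀ a ∈ gr i, ∀ b ∈ gr j, jacobiator B i j a b = 0 := by
  have ext : ∀ i j, ∀ a ∈ gr i, ∀ b ∈ gr j, (∀ v ∈ G, jacobiator B i j a b v = 0) →
      jacobiator B i j a b = 0 := fun i j a ha b hb =>
    eq_zero_of_gradedDerivation gr hG hgen (i + j) fun _ _ _ hc d _ => hB.jacobiator_mul ha hb hc d
  have generators : ∀ i j, ∀ u ∈ G, ∀ v ∈ G, u ∈ gr i → v ∈ gr j → jacobiator B i j u v = 0 := by
    intro i j u hu v hv hui hvj
    refine ext i j u hui v hvj fun w hw => ?_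
    obtain ⟨k, hwk⟩ := hG w hw
    obtain ⟨e₁, he₁⟩ := hscalar v hv w hw
    obtain ⟨e₂, he₂⟩ := hscalar u hu v hv
    obtain ⟨e₃, he₃⟩ := hscalar u hu w hw
    simp [he₁, he₂, he₃, hB.apply_one hui, hB.apply_one hvj, hB.one_apply hwk]
  have generator_left : ∀ i j, ∀ v ∈ G, v ∈ gr i → ∀ a ∈ gr j, jacobiator B i j v a = 0 := by
    intro i j v hv hvi a ha
    refine ext i j v hvi a ha fun w hw => ?_
    obtain ⟨k, hwk⟩ := hG w hw
    rw [hB.jacobiator_rotate hvi ha hwk, hB.jacobiator_rotate ha hwk hvi,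
      generators k i w hw v hv hwk hvi, LinearMap.zero_apply, smul_zero, smul_zero]
  intro i j a ha b hb
  refine ext i j a ha b hb fun v hv => ?_
  obtain ⟨k, hvk⟩ := hG v hv
  rw [hB.jacobiator_rotate ha hb hvk, hB.jacobiator_rotate hb hvk ha,
    generator_left k i v hv hvk a ha, LinearMap.zero_apply, smul_zero, smul_zero]

theorem IsAntisymmBiderivation.jacobi (hB : IsAntisymmBiderivation gr B) {G : Set A}
    (hG : ∀ v ∈ G, ∃ i, v ∈ gr i) (hgen : Algebra.adjoin 𝕜 G = ⊤)
    (hscalar : ∀ v ∈ G, ∀ w ∈ G, ∃ e : 𝕜, B v w = e • 1) {i j : ZMod 2} {a b : A}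
    (ha : a ∈ gr i) (hb : b ∈ gr j) (c : A) :
    B a (B b c) = B (B a b) c + ksign 𝕜 i j • B b (B a c) := by
  have hJ := LinearMap.congr_fun (hB.jacobiator_eq_zero hG hgen hscalar i j a ha b hb) c
  rwa [jacobiator_apply, LinearMap.zero_apply, sub_sub, sub_eq_zero] at hJ

end Jacobi

section Contraction

variable {𝕜 : Type} [Field 𝕜] {A : Type} [Ring A] [Algebra 𝕜 A]
variable (gr : ZMod 2 → Submodule 𝕜 A) [GradedAlgebra gr] {τ P : A ⊗[𝕜] A →ₗ[𝕜] A ⊗[𝕜] A}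

variable (P) in
noncomputable def muP : A →ₗ[𝕜] A →ₗ[𝕜] A := (TensorProduct.mk 𝕜 A A).compr₂ (mu 𝕜 A ∘ₗ P)

@[simp] theorem muP_apply (a b : A) : muP P a b = mu 𝕜 A (P (a ⊗ₜ b)) := rfl

@[simp] theorem mu_tmul (a b : A) : mu 𝕜 A (a ⊗ₜ b) = a * b := LinearMap.mul'_apply

@[simp] theorem mu12_tmul (a b c : A) : mu12 𝕜 A (a ⊗ₜ (b ⊗ₜ c)) = (a * b) ⊗ₜ c := by
  simp [mu12]

@[simp] theorem mu23_tmul (a b c : A) : mu23 𝕜 A (a ⊗ₜ (b ⊗ₜ c)) = a ⊗ₜ (b * c) := by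
  simp [mu23]

theorem mu_comp_mu12 : mu 𝕜 A ∘ₗ mu12 𝕜 A = mu 𝕜 A ∘ₗ mu23 𝕜 A :=
  TensorProduct.ext_threefold' fun a b c => by simp [mul_assoc]

theorem mu_comp_flip (hτ : IsKoszulFlip 𝕜 A gr τ)
    (hcomm : ∀ i j, ∀ a ∈ gr i, ∀ b ∈ gr j, a * b = ksign 𝕜 i j • (b * a)) :
    mu 𝕜 A ∘ₗ τ = mu 𝕜 A :=
  TensorProduct.ext <| ext_of_homogeneous₂ gr fun i j a ha b hb => by
    simp [hτ i j a ha b hb, hcomm i j a ha b hb]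

theorem mu_mu23_P12 (a b c : A) :
    mu 𝕜 A (mu23 𝕜 A (P12 𝕜 A P (a ⊗ₜ (b ⊗ₜ c)))) = muP P a b * c := by
  rw [← LinearMap.comp_apply (mu 𝕜 A), ← mu_comp_mu12]
  simp [P12, mu12]

theorem mu_mu23_P13 (hτ : IsKoszulFlip 𝕜 A gr τ)
    (hcomm : ∀ i j, ∀ a ∈ gr i, ∀ b ∈ gr j, a * b = ksign 𝕜 i j • (b * a))
    {j k : ZMod 2} (a : A) {b c : A} (hb : b ∈ gr j) (hc : c ∈ gr k) :
    mu 𝕜 A (mu23 𝕜 A (P13 𝕜 A P τ (a ⊗ₜ (b ⊗ₜ c)))) = ksign 𝕜 j k • (muP P a c * b) := by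
  have hflip : mu23 𝕜 A ∘ₗ LinearMap.lTensor A τ = mu23 𝕜 A := by
    rw [mu23, ← LinearMap.lTensor_comp, mu_comp_flip gr hτ hcomm]
  rw [P13, LinearMap.comp_apply, ← LinearMap.comp_apply (mu23 𝕜 A), hflip, LinearMap.comp_apply,
    LinearMap.lTensor_tmul, hτ j k b hb c hc, TensorProduct.tmul_smul, map_smul, map_smul,
    map_smul, mu_mu23_P12]

theorem mu_mu23_P23 (a b c : A) :
    mu 𝕜 A (mu23 𝕜 A (P23 𝕜 A P (a ⊗ₜ (b ⊗ₜ c)))) = a * muP P b c := by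
  simp [P23, mu23]

theorem isBiderivation_muP (hτ : IsKoszulFlip 𝕜 A gr τ)
    (hcomm : ∀ i j, ∀ a ∈ gr i, ∀ b ∈ gr j, a * b = ksign 𝕜 i j • (b * a))
    (hP : LeibnizRules 𝕜 A P τ) : IsBiderivation gr (muP P) where
  mul_left _ j k a _ b hb c hc := by
    have h := congr(mu 𝕜 A ($(hP.1) (a ⊗ₜ (b ⊗ₜ c))))
    rw [LinearMap.comp_apply, LinearMap.comp_apply, ← LinearMap.comp_apply (mu 𝕜 A) (mu12 𝕜 A),
      mu_comp_mu12, LinearMap.comp_apply, LinearMap.add_apply, map_add, map_add,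
      mu_mu23_P13 gr hτ hcomm a hb hc, mu_mu23_P23, mu12_tmul] at h
    rw [muP_apply, h, add_comm]
  mul_right _ j k a _ b hb c hc := by
    have h := congr(mu 𝕜 A ($(hP.2) (a ⊗ₜ (b ⊗ₜ c))))
    rw [LinearMap.comp_apply, LinearMap.comp_apply, LinearMap.add_apply, map_add, map_add,
      mu_mu23_P12, mu_mu23_P13 gr hτ hcomm a hb hc, mu23_tmul] at h
    rw [muP_apply, h]

end Contraction

section PoissonBracket

variable {𝕜 : Type} [Field 𝕜] [CharZero 𝕜] {A : Type} [Ring A] [Algebra 𝕜 A]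
variable {gr : ZMod 2 → Submodule 𝕜 A} [GradedAlgebra gr] {τ P : A ⊗[𝕜] A →ₗ[𝕜] A ⊗[𝕜] A}

theorem brA_eq_muP (a b : A) : brA 𝕜 A P τ a b = muP (P - τ ∘ₗ P ∘ₗ τ) a b := rfl

theorem brA_eq_sub (hτ : IsKoszulFlip 𝕜 A gr τ)
    (hcomm : ∀ i j, ∀ a ∈ gr i, ∀ b ∈ gr j, a * b = ksign 𝕜 i j • (b * a))
    {i j : ZMod 2} {a b : A} (ha : a ∈ gr i) (hb : b ∈ gr j) :
    brA 𝕜 A P τ a b = muP P a b - ksign 𝕜 i j • muP P b a := by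
  have hflip := LinearMap.congr_fun (mu_comp_flip gr hτ hcomm) (P (b ⊗ₜ a))
  rw [LinearMap.comp_apply] at hflip
  simp [brA, hflip, hτ i j a ha b hb]

theorem isAntisymmBiderivation_brA (hτ : IsKoszulFlip 𝕜 A gr τ)
    (hcomm : ∀ i j, ∀ a ∈ gr i, ∀ b ∈ gr j, a * b = ksign 𝕜 i j • (b * a))
    (hP : IsBiderivation gr (muP P))
    (hPgr : ∀ i j, ∀ a ∈ gr i, ∀ b ∈ gr j, muP P a b ∈ gr (i + j)) :
    IsAntisymmBiderivation gr (muP (P - τ ∘ₗ P ∘ₗ τ)) where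
  mem_gr i j a ha b hb := by
    rw [← brA_eq_muP, brA_eq_sub hτ hcomm ha hb]
    exact sub_mem (hPgr i j a ha b hb) (Submodule.smul_mem _ _ (add_comm j i ▸ hPgr j i b hb a ha))
  antisymm i j a ha b hb := by
    rw [← brA_eq_muP, ← brA_eq_muP, brA_eq_sub hτ hcomm ha hb, brA_eq_sub hτ hcomm hb ha,
      smul_sub, smul_smul, ksign_comm j i, ksign_mul_self, one_smul, neg_sub]
  mul_right i j a ha b hb c := by
    induction c using DirectSum.Decomposition.inductionOn gr with
    | zero => simp
    | add c c' hc hc' =>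
      simp only [mul_add, map_add, smul_add, hc, hc']
      abel
    | @homogeneous k c =>
      obtain ⟨c, hc⟩ := c
      simp only [← brA_eq_muP]
      rw [brA_eq_sub hτ hcomm ha (SetLike.mul_mem_graded hb hc), brA_eq_sub hτ hcomm ha hb,
        brA_eq_sub hτ hcomm ha hc, hP.mul_right i j k a ha b hb c hc,
        hP.mul_left j k i b hb c hc a ha, hcomm (i + k) j _ (hPgr i k a ha c hc) b hb]
      simp only [ksign_add_left, ksign_add_right, smul_sub, smul_add, mul_sub, sub_mul, smul_smul,
        smul_mul_assoc, mul_smul_comm]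
      rcases i.two_eq_zero_or_one with rfl | rfl <;> rcases j.two_eq_zero_or_one with rfl | rfl <;>
        rcases k.two_eq_zero_or_one with rfl | rfl <;>
        simp only [ksign_zero_left, ksign_zero_right, ksign_one_one] <;> module

end PoissonBracket

section Generators

variable {𝕜 : Type} [Field 𝕜] {A : Type} [Ring A] [Algebra 𝕜 A]
variable {gr : ZMod 2 → Submodule 𝕜 A} {V : Submodule 𝕜 A}

theorem adjoin_homogeneous_eq_top (hV : Algebra.adjoin 𝕜 (V : Set A) = ⊤)
    (hVgr : V = (V ⊓ gr 0) ⊔ (V ⊓ gr 1)) :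
    Algebra.adjoin 𝕜 {v | ∃ i, v ∈ V ∧ v ∈ gr i} = ⊤ := by
  refine eq_top_iff.2 (hV ▸ Algebra.adjoin_le fun v hv => ?_)
  rw [SetLike.mem_coe, hVgr] at hv
  obtain ⟨y, hy, z, hz, rfl⟩ := Submodule.mem_sup.1 hv
  exact add_mem (Algebra.subset_adjoin ⟨0, Submodule.mem_inf.1 hy⟩)
    (Algebra.subset_adjoin ⟨1, Submodule.mem_inf.1 hz⟩)

theorem smul_one_mem_gr_add [GradedAlgebra gr] (Λ : A →ₗ[𝕜] A →ₗ[𝕜] 𝕜)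
    (hΛ : ∀ v ∈ V ⊓ gr 0, ∀ w ∈ V ⊓ gr 1, Λ v w = 0 ∧ Λ w v = 0) {i j : ZMod 2} {v w : A}
    (hv : v ∈ V) (hvi : v ∈ gr i) (hw : w ∈ V) (hwj : w ∈ gr j) :
    Λ v w • (1 : A) ∈ gr (i + j) := by
  have h1 := SetLike.one_mem_graded gr
  rcases i.two_eq_zero_or_one with rfl | rfl <;> rcases j.two_eq_zero_or_one with rfl | rfl
  · simpa using Submodule.smul_mem _ _ h1
  · simp [(hΛ v ⟨hv, hvi⟩ w ⟨hw, hwj⟩).1]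
  · simp [(hΛ w ⟨hw, hwj⟩ v ⟨hv, hvi⟩).2]
  · simpa [show (1 + 1 : ZMod 2) = 0 from rfl] using Submodule.smul_mem _ _ h1

end Generators

theorem statement1_general
    (𝕜 : Type) [Field 𝕜] [CharZero 𝕜]
    (A : Type) [Ring A] [Algebra 𝕜 A]
    (gr : ZMod 2 → Submodule 𝕜 A) [GradedAlgebra gr]
    (deg : ℕ → Submodule 𝕜 A)
    (hcomm : ∀ (i j : ZMod 2), ∀ a ∈ gr i, ∀ b ∈ gr j, a * b = ksign 𝕜 i j • (b * a))
    (hgen : Algebra.adjoin 𝕜 ((deg 1 : Submodule 𝕜 A) : Set A) = ⊤)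
    (hVgr : deg 1 = (deg 1 ⊓ gr 0) ⊔ (deg 1 ⊓ gr 1))
    (τ : A ⊗[𝕜] A →ₗ[𝕜] A ⊗[𝕜] A) (hτ : IsKoszulFlip 𝕜 A gr τ)
    (Λ : A →ₗ[𝕜] A →ₗ[𝕜] 𝕜)
    (hΛeven : ∀ v ∈ deg 1 ⊓ gr 0, ∀ w ∈ deg 1 ⊓ gr 1, Λ v w = 0 ∧ Λ w v = 0)
    (P : A ⊗[𝕜] A →ₗ[𝕜] A ⊗[𝕜] A)
    (hPgen : ∀ v ∈ deg 1, ∀ w ∈ deg 1,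
      P (v ⊗ₜ[𝕜] w) = Λ v w • ((1 : A) ⊗ₜ[𝕜] (1 : A)))
    (hPLeib : LeibnizRules 𝕜 A P τ) :
    -- the bracket is ℤ₂-graded
    (∀ (i j : ZMod 2), ∀ a ∈ gr i, ∀ b ∈ gr j,
      brA 𝕜 A P τ a b ∈ gr (i + j)) ∧
    -- graded antisymmetry
    (∀ (i j : ZMod 2), ∀ a ∈ gr i, ∀ b ∈ gr j,
      brA 𝕜 A P τ a b = -(ksign 𝕜 i j • brA 𝕜 A P τ b a)) ∧
    -- graded Leibniz rule in each argument
    (∀ (i j : ZMod 2), ∀ a ∈ gr i, ∀ b ∈ gr j, ∀ c : A,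
      brA 𝕜 A P τ a (b * c) =
        brA 𝕜 A P τ a b * c + ksign 𝕜 i j • (b * brA 𝕜 A P τ a c)) ∧
    (∀ (i j k : ZMod 2), ∀ a ∈ gr i, ∀ b ∈ gr j, ∀ c ∈ gr k,
      brA 𝕜 A P τ (a * b) c =
        a * brA 𝕜 A P τ b c + ksign 𝕜 j k • (brA 𝕜 A P τ a c * b)) ∧
    -- graded Jacobi identity
    (∀ (i j : ZMod 2), ∀ a ∈ gr i, ∀ b ∈ gr j, ∀ c : A,
      brA 𝕜 A P τ a (brA 𝕜 A P τ b c) =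
        brA 𝕜 A P τ (brA 𝕜 A P τ a b) c +
          ksign 𝕜 i j • brA 𝕜 A P τ b (brA 𝕜 A P τ a c)) ∧
    -- `{v, w} = 2 μ ∘ P_{Λ₋}(v ⊗ w)`: the bracket only depends on the antisymmetric
    -- part `Λ₋ = ½(Λ − Λ∘τ)` of `Λ`
    (∀ P' : A ⊗[𝕜] A →ₗ[𝕜] A ⊗[𝕜] A,
      (∀ (i j : ZMod 2), ∀ v ∈ deg 1 ⊓ gr i, ∀ w ∈ deg 1 ⊓ gr j,
        P' (v ⊗ₜ[𝕜] w) =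
          ((2:𝕜)⁻¹ * (Λ v w - ksign 𝕜 i j * Λ w v)) • ((1 : A) ⊗ₜ[𝕜] (1 : A))) →
      LeibnizRules 𝕜 A P' τ →
      ∀ a b : A, brA 𝕜 A P τ a b = (2:𝕜) • mu 𝕜 A (P' (a ⊗ₜ[𝕜] b))) := by
  set G : Set A := {v | ∃ i, v ∈ deg 1 ∧ v ∈ gr i}
  have hG : ∀ v ∈ G, ∃ i, v ∈ gr i := fun v ⟨i, _, hv⟩ => ⟨i, hv⟩
  have hgenG : Algebra.adjoin 𝕜 G = ⊤ := adjoin_homogeneous_eq_top hgen hVgr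
  have hP := isBiderivation_muP gr hτ hcomm hPLeib
  have hPG : ∀ v ∈ deg 1, ∀ w ∈ deg 1, muP P v w = Λ v w • 1 := fun v hv w hw => by
    simp [hPgen v hv w hw]
  have hPgr := hP.mem_gr hG hgenG fun i j v ⟨_, hv, _⟩ w ⟨_, hw, _⟩ hvi hwj =>
    hPG v hv w hw ▸ smul_one_mem_gr_add Λ hΛeven hv hvi hw hwj
  have hB := isAntisymmBiderivation_brA hτ hcomm hP hPgr
  have hBG : ∀ i j, ∀ v ∈ deg 1 ⊓ gr i, ∀ w ∈ deg 1 ⊓ gr j,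
      brA 𝕜 A P τ v w = (Λ v w - ksign 𝕜 i j * Λ w v) • 1 := fun i j v hv w hw => by
    rw [brA_eq_sub hτ hcomm hv.2 hw.2, hPG v hv.1 w hw.1, hPG w hw.1 v hv.1, smul_smul, sub_smul]
  have hBscalar : ∀ v ∈ G, ∀ w ∈ G, ∃ e : 𝕜, brA 𝕜 A P τ v w = e • 1 :=
    fun v ⟨i, hv⟩ w ⟨j, hw⟩ => ⟨_, hBG i j v hv w hw⟩
  refine ⟨hB.mem_gr, hB.antisymm, hB.mul_right, fun i j k a ha b hb c hc => hB.mul_left ha hb hc,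
    fun i j a ha b hb => hB.jacobi hG hgenG hBscalar ha hb,
    fun P' hP' hP'Leib => LinearMap.congr_fun₂ ((hB.isBiderivation hcomm).ext
      ((isBiderivation_muP gr hτ hcomm hP'Leib).smul 2) hG hgenG fun v ⟨i, hv⟩ w ⟨j, hw⟩ => ?_)⟩
  rw [← brA_eq_muP, hBG i j v hv w hw, LinearMap.smul_apply, LinearMap.smul_apply, muP_apply,
    hP' i j v hv w hw]
  simp [smul_smul]

/-- `{v, w} := μ ∘ (P_Λ − P_Λ^{op})(v ⊗ w)` defines a `ℤ₂`-graded
Poisson bracket on `Sym(V)`: it is graded antisymmetric, satisfies the graded Leibniz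
rule and the graded Jacobi identity.  Moreover `{v, w} = 2 μ ∘ P_{Λ₋}(v ⊗ w)` depends
only on the antisymmetric part `Λ₋` of `Λ`. -/
theorem statement1
    (𝕜 : Type) [Field 𝕜] [CharZero 𝕜]
    (A : Type) [Ring A] [Algebra 𝕜 A]
    (gr : ZMod 2 → Submodule 𝕜 A) [GradedAlgebra gr]
    (deg : ℕ → Submodule 𝕜 A) [GradedAlgebra deg]
    (hcomm : ∀ (i j : ZMod 2), ∀ a ∈ gr i, ∀ b ∈ gr j, a * b = ksign 𝕜 i j • (b * a))
    (hgen : Algebra.adjoin 𝕜 ((deg 1 : Submodule 𝕜 A) : Set A) = ⊤)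
    (hVgr : deg 1 = (deg 1 ⊓ gr 0) ⊔ (deg 1 ⊓ gr 1))
    (τ : A ⊗[𝕜] A →ₗ[𝕜] A ⊗[𝕜] A) (hτ : IsKoszulFlip 𝕜 A gr τ)
    (Λ : A →ₗ[𝕜] A →ₗ[𝕜] 𝕜)
    (hΛeven : ∀ v ∈ deg 1 ⊓ gr 0, ∀ w ∈ deg 1 ⊓ gr 1, Λ v w = 0 ∧ Λ w v = 0)
    (P : A ⊗[𝕜] A →ₗ[𝕜] A ⊗[𝕜] A)
    (hPgen : ∀ v ∈ deg 1, ∀ w ∈ deg 1,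
      P (v ⊗ₜ[𝕜] w) = Λ v w • ((1 : A) ⊗ₜ[𝕜] (1 : A)))
    (hPLeib : LeibnizRules 𝕜 A P τ)
    (hPdeg : ∀ n m : ℕ, ∀ x ∈ tsub 𝕜 A (deg (n+1)) (deg (m+1)),
      P x ∈ tsub 𝕜 A (deg n) (deg m))
    (hP0l : ∀ m : ℕ, ∀ x ∈ tsub 𝕜 A (deg 0) (deg m), P x = 0)
    (hP0r : ∀ n : ℕ, ∀ x ∈ tsub 𝕜 A (deg n) (deg 0), P x = 0) :
    -- the bracket is ℤ₂-graded
    (∀ (i j : ZMod 2), ∀ a ∈ gr i, ∀ b ∈ gr j,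
      brA 𝕜 A P τ a b ∈ gr (i + j)) ∧
    -- graded antisymmetry
    (∀ (i j : ZMod 2), ∀ a ∈ gr i, ∀ b ∈ gr j,
      brA 𝕜 A P τ a b = -(ksign 𝕜 i j • brA 𝕜 A P τ b a)) ∧
    -- graded Leibniz rule in each argument
    (∀ (i j : ZMod 2), ∀ a ∈ gr i, ∀ b ∈ gr j, ∀ c : A,
      brA 𝕜 A P τ a (b * c) =
        brA 𝕜 A P τ a b * c + ksign 𝕜 i j • (b * brA 𝕜 A P τ a c)) ∧
    (∀ (i j k : ZMod 2), ∀ a ∈ gr i, ∀ b ∈ gr j, ∀ c ∈ gr k,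
      brA 𝕜 A P τ (a * b) c =
        a * brA 𝕜 A P τ b c + ksign 𝕜 j k • (brA 𝕜 A P τ a c * b)) ∧
    -- graded Jacobi identity
    (∀ (i j : ZMod 2), ∀ a ∈ gr i, ∀ b ∈ gr j, ∀ c : A,
      brA 𝕜 A P τ a (brA 𝕜 A P τ b c) =
        brA 𝕜 A P τ (brA 𝕜 A P τ a b) c +
          ksign 𝕜 i j • brA 𝕜 A P τ b (brA 𝕜 A P τ a c)) ∧
    -- `{v, w} = 2 μ ∘ P_{Λ₋}(v ⊗ w)`: the bracket only depends on the antisymmetric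
    -- part `Λ₋ = ½(Λ − Λ∘τ)` of `Λ`
    (∀ P' : A ⊗[𝕜] A →ₗ[𝕜] A ⊗[𝕜] A,
      (∀ (i j : ZMod 2), ∀ v ∈ deg 1 ⊓ gr i, ∀ w ∈ deg 1 ⊓ gr j,
        P' (v ⊗ₜ[𝕜] w) =
          ((2:𝕜)⁻¹ * (Λ v w - ksign 𝕜 i j * Λ w v)) • ((1 : A) ⊗ₜ[𝕜] (1 : A))) →
      LeibnizRules 𝕜 A P' τ →
      ∀ a b : A, brA 𝕜 A P τ a b = (2:𝕜) • mu 𝕜 A (P' (a ⊗ₜ[𝕜] b))) :=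
  statement1_general 𝕜 A gr deg hcomm hgen hVgr τ hτ Λ hΛeven P hPgen hPLeib
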